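/- For each integer d ≥ 2, the quantities P_p(d) = A_p(5)·(((d−1)(d+4)/((d+1)(d+2)))^p − ((d−2)(d+3)/(d(d+1)))^p), for p ≥ 1, are nonnegative and sum to 1 over p ≥ 1. -/

import Mathlib

/-- The coefficients `A_p(C)`, defined for `p ≥ 1`. -/
noncomputable def Acoef (C : ℝ) (p : ℕ) : ℝ :=
  C ^ ((1 : ℤ) - 2 * p) *
    ∑ q ∈ Finset.range p,
      (Nat.choose (p - 1) q : ℝ) * (Nat.choose (2 * q + 1) q : ℝ) *
        ((C ^ 2 - 1) / 4) ^ (q + 1)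

/-- The limiting probability that the hull perimeter at distance `d` equals `2p` for
infinite quadrangulations. -/
noncomputable def Pperim (d p : ℕ) : ℝ :=
  Acoef 5 p *
    ((((d : ℝ) - 1) * (d + 4) / ((d + 1) * (d + 2))) ^ p -
      (((d : ℝ) - 2) * (d + 3) / (d * (d + 1))) ^ p)


/-!
Put `u = β / C²`. Summing `Acoef C (p + 1) * β ^ (p + 1)` over `p` before `q` produces, for each
`q`, a negative binomial series `∑ₖ binom(q + k, q) uᵏ = (1 - u)^{-(q+1)}`. What remains is
`∑ₚ A_p(C) βᵖ = C / 2 · ∑_{m ≥ 1} binom(2m, m) xᵐ` with `x = (C² - 1) β / (4 (C² - β))`, and the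
binomial series of `(1 - 4x)^{-1/2}` gives `C + 2 ∑ₚ A_p(C) βᵖ = √((C² - β) / (1 - β))`.
At `β = hullBeta d` the square root equals `2d + 3`, so `∑ₚ A_p(5) βᵖ = d - 1`. Since the second
evaluation point of `Pperim d` is `hullBeta (d - 1)`, the total mass telescopes to
`(d - 1) - (d - 2) = 1`, and nonnegativity holds because `hullBeta` is increasing and `A_p(5) ≥ 0`.
-/

open Finset Polynomial

theorem Ring.choose_succ_mul {K : Type*} [Field K] [CharZero K] (r : K) (n : ℕ) :
    Ring.choose r (n + 1) * (n + 1) = Ring.choose r n * (r - n) := by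
  have h := Ring.descPochhammer_eq_factorial_smul_choose r (n + 1)
  rw [descPochhammer_succ_right, smeval_mul, Ring.descPochhammer_eq_factorial_smul_choose,
    smeval_sub, smeval_X, smeval_natCast, Nat.factorial_succ] at h
  simp only [nsmul_eq_mul, npow_one, npow_zero, Nat.cast_mul, Nat.cast_succ] at h
  have hf : (n.factorial : K) ≠ 0 := by exact_mod_cast n.factorial_ne_zero
  apply mul_left_cancel₀ hf
  linear_combination -h

theorem Ring.choose_neg_inv_two {K : Type*} [Field K] [CharZero K] (n : ℕ) :
    Ring.choose (-2⁻¹ : K) n = (-4⁻¹) ^ n * n.centralBinom := by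
  induction n with
  | zero => simp
  | succ n ih =>
    have hcb : ((n + 1 : ℕ) : K) * (n + 1).centralBinom = 2 * (2 * n + 1) * n.centralBinom := by
      exact_mod_cast n.succ_mul_centralBinom_succ
    have hn : (n + 1 : K) ≠ 0 := by exact_mod_cast n.succ_ne_zero
    apply mul_right_cancel₀ hn
    push_cast at hcb
    rw [Ring.choose_succ_mul, ih, pow_succ]
    linear_combination (-4⁻¹ : K) ^ n * 4⁻¹ * hcb

theorem hasSum_centralBinom_mul_pow {x : ℝ} (hx : |x| < 4⁻¹) :
    HasSum (fun n ↦ (n.centralBinom : ℝ) * x ^ n) (√(1 - 4 * x))⁻¹ := by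
  have hmem : -4 * x ∈ Metric.eball (0 : ℝ) 1 := by
    rw [← ENNReal.ofReal_one, Metric.eball_ofReal, mem_ball_zero_iff, Real.norm_eq_abs, abs_mul]
    norm_num
    linarith
  have h := Real.one_add_rpow_hasFPowerSeriesOnBall_zero (a := -2⁻¹) |>.hasSum hmem
  have hterm (n : ℕ) : binomialSeries ℝ (-2⁻¹ : ℝ) n (fun _ ↦ -4 * x) = n.centralBinom * x ^ n := by
    rw [binomialSeries_apply, List.ofFn_const, List.prod_replicate, Ring.choose_neg_inv_two,
      smul_eq_mul, mul_right_comm, ← mul_pow, mul_comm]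
    ring
  have hval : (1 + (0 + -4 * x)) ^ (-2⁻¹ : ℝ) = (√(1 - 4 * x))⁻¹ := by
    rw [Real.sqrt_eq_rpow, ← Real.rpow_neg (by linarith [le_abs_self x])]
    norm_num
    ring_nf
  simpa only [hterm, hval] using h

theorem HasSum.sum_antidiagonal {α A : Type*} [AddCommMonoid α] [TopologicalSpace α]
    [ContinuousAdd α] [RegularSpace α] [AddCommMonoid A] [HasAntidiagonal A]
    {g : A × A → α} {s : α} (h : HasSum g s) :
    HasSum (fun n ↦ ∑ ij ∈ antidiagonal n, g ij) s :=
  (HasAntidiagonal.sigmaAntidiagonalEquivProd.hasSum_iff.mpr h).sigma fun n ↦ by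
    simpa [Finset.sum_attach] using hasSum_fintype fun ij : antidiagonal n ↦ g ij

theorem hasSum_sum_choose_mul_pow_succ {a : ℕ → ℝ} (ha : ∀ q, 0 ≤ a q) {u s : ℝ}
    (hu₀ : 0 ≤ u) (hu₁ : u < 1) (hs : HasSum (fun q ↦ a q * (u / (1 - u)) ^ (q + 1)) s) :
    HasSum (fun p ↦ ∑ q ∈ range (p + 1), (p.choose q : ℝ) * a q * u ^ (p + 1)) s := by
  set g : ℕ × ℕ → ℝ := fun qk ↦ ((qk.1 + qk.2).choose qk.1 : ℝ) * a qk.1 * u ^ (qk.1 + qk.2 + 1)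
  have hcol (q : ℕ) : HasSum (fun k ↦ g (q, k)) (a q * (u / (1 - u)) ^ (q + 1)) := by
    have hu : ‖u‖ < 1 := by rwa [Real.norm_of_nonneg hu₀]
    rw [show a q * (u / (1 - u)) ^ (q + 1) = a q * u ^ (q + 1) * (1 / (1 - u) ^ (q + 1)) by
      rw [div_pow]; ring]
    refine ((hasSum_choose_mul_geometric_of_norm_lt_one q hu).mul_left _).congr_fun fun k ↦ ?_
    simp only [g]
    rw [add_comm k q, pow_add]
    ring
  have hg : Summable g :=
    (summable_prod_of_nonneg fun qk ↦
      mul_nonneg (mul_nonneg (Nat.cast_nonneg _) (ha qk.1)) (pow_nonneg hu₀ _)).mpr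
      ⟨fun q ↦ (hcol q).summable, hs.summable.congr fun q ↦ ((hcol q).tsum_eq).symm⟩
  have hgs : HasSum g s := (hg.hasSum.prod_fiberwise hcol).unique hs ▸ hg.hasSum
  convert hgs.sum_antidiagonal using 2 with p
  rw [Nat.sum_antidiagonal_eq_sum_range_succ_mk]
  refine sum_congr rfl fun q hq ↦ ?_
  simp only [g, Nat.add_sub_cancel' (mem_range_succ_iff.mp hq)]

theorem Nat.centralBinom_succ_eq_two_mul_choose (n : ℕ) :
    (n + 1).centralBinom = 2 * (2 * n + 1).choose n := by
  rw [Nat.centralBinom_eq_two_mul_choose, show 2 * (n + 1) = 2 * n + 1 + 1 by ring,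
    Nat.choose_succ_succ', Nat.choose_symm_half]
  omega

theorem zpow_one_sub_two_mul {K : Type*} [DivisionRing K] {C : K} (hC : C ≠ 0) (n : ℕ) :
    C ^ ((1 : ℤ) - 2 * n) = C / (C ^ 2) ^ n := by
  rw [zpow_sub₀ hC, zpow_one, zpow_mul, zpow_natCast, zpow_ofNat, div_eq_mul_inv]

theorem Acoef_nonneg {C : ℝ} (hC : 1 ≤ C) (p : ℕ) : 0 ≤ Acoef C p := by
  have hc : 0 ≤ (C ^ 2 - 1) / 4 := by nlinarith
  unfold Acoef
  have := zpow_pos (by linarith : (0 : ℝ) < C) ((1 : ℤ) - 2 * p)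
  positivity

theorem Acoef_succ_mul_pow {C : ℝ} (hC : C ≠ 0) (β : ℝ) (p : ℕ) :
    Acoef C (p + 1) * β ^ (p + 1) = C * ∑ q ∈ range (p + 1),
      (p.choose q : ℝ) * ((2 * q + 1).choose q * ((C ^ 2 - 1) / 4) ^ (q + 1)) *
        (β / C ^ 2) ^ (p + 1) := by
  rw [Acoef, Nat.add_sub_cancel, zpow_one_sub_two_mul hC, mul_sum, sum_mul, mul_sum]
  refine sum_congr rfl fun q _ ↦ ?_
  simp only [div_pow]
  field_simp

theorem hasSum_Acoef_mul_pow {C β : ℝ} (hC : 1 ≤ C) (hβ₀ : 0 ≤ β) (hβ₁ : β < 1) :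
    HasSum (fun p ↦ Acoef C (p + 1) * β ^ (p + 1)) ((√((C ^ 2 - β) / (1 - β)) - C) / 2) := by
  have hC₀ : C ≠ 0 := by positivity
  have hc : 0 ≤ (C ^ 2 - 1) / 4 := by nlinarith
  have hCβ : 0 < C ^ 2 - β := by nlinarith
  have hu₁ : β / C ^ 2 < 1 := (div_lt_one (by positivity)).mpr (by nlinarith)
  have hv : β / C ^ 2 / (1 - β / C ^ 2) = β / (C ^ 2 - β) := by field_simp
  set x := (C ^ 2 - 1) / 4 * (β / (C ^ 2 - β)) with hx_def
  have hx : |x| < 4⁻¹ := by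
    rw [abs_of_nonneg (by positivity), hx_def, mul_div_assoc', div_lt_iff₀ (by positivity)]
    nlinarith
  have h1x : 1 - 4 * x = C ^ 2 * ((1 - β) / (C ^ 2 - β)) := by
    rw [hx_def]
    field_simp
    ring
  have hcb := (hasSum_nat_add_iff' 1).mpr (hasSum_centralBinom_mul_pow hx)
  rw [sum_range_one, Nat.centralBinom_zero, pow_zero, Nat.cast_one, mul_one] at hcb
  have hs : HasSum (fun q ↦ (2 * q + 1).choose q * ((C ^ 2 - 1) / 4) ^ (q + 1) *
      (β / C ^ 2 / (1 - β / C ^ 2)) ^ (q + 1)) (((√(1 - 4 * x))⁻¹ - 1) / 2) := by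
    refine (hcb.div_const 2).congr_fun fun q ↦ ?_
    rw [hv, Nat.centralBinom_succ_eq_two_mul_choose, hx_def, mul_pow]
    push_cast
    ring
  have hval : (√((C ^ 2 - β) / (1 - β)) - C) / 2 = C * (((√(1 - 4 * x))⁻¹ - 1) / 2) := by
    have hy : 0 < √((1 - β) / (C ^ 2 - β)) := Real.sqrt_pos.mpr (by apply div_pos <;> linarith)
    rw [h1x, Real.sqrt_mul (sq_nonneg C), Real.sqrt_sq (by positivity), ← inv_div (1 - β),
      Real.sqrt_inv]
    field_simp
  rw [hval]
  exact ((hasSum_sum_choose_mul_pow_succ (fun q ↦ by positivity) (by positivity) hu₁ hs).mul_left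
    C).congr_fun fun p ↦ Acoef_succ_mul_pow hC₀ β p

noncomputable def hullBeta (x : ℝ) : ℝ := (x - 1) * (x + 4) / ((x + 1) * (x + 2))

theorem one_sub_hullBeta {x : ℝ} (hx : -1 < x) : 1 - hullBeta x = 6 / ((x + 1) * (x + 2)) := by
  have : x + 1 ≠ 0 := by linarith
  have : x + 2 ≠ 0 := by linarith
  rw [hullBeta]
  field_simp
  ring

theorem hullBeta_nonneg {x : ℝ} (hx : 1 ≤ x) : 0 ≤ hullBeta x :=
  div_nonneg (by nlinarith) (by nlinarith)

theorem hullBeta_lt_one {x : ℝ} (hx : -1 < x) : hullBeta x < 1 := by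
  have := one_sub_hullBeta hx
  have : 0 < 6 / ((x + 1) * (x + 2)) := div_pos (by norm_num) (by nlinarith)
  linarith

theorem monotoneOn_hullBeta : MonotoneOn hullBeta (Set.Ioi (-1)) := by
  rintro x (hx : -1 < x) y (hy : -1 < y) hxy
  have h : 6 / ((y + 1) * (y + 2)) ≤ 6 / ((x + 1) * (x + 2)) :=
    div_le_div_of_nonneg_left (by norm_num) (by nlinarith) (by nlinarith)
  linarith [one_sub_hullBeta hx, one_sub_hullBeta hy]

theorem sqrt_five_sq_sub_hullBeta_div {x : ℝ} (hx : -1 < x) :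
    √((5 ^ 2 - hullBeta x) / (1 - hullBeta x)) = 2 * x + 3 := by
  have : x + 1 ≠ 0 := by linarith
  have : x + 2 ≠ 0 := by linarith
  rw [show 5 ^ 2 - hullBeta x = 24 + (1 - hullBeta x) by ring, one_sub_hullBeta hx,
    show (24 + 6 / ((x + 1) * (x + 2))) / (6 / ((x + 1) * (x + 2))) = (2 * x + 3) ^ 2 by
      field_simp; ring]
  exact Real.sqrt_sq (by linarith)

theorem hasSum_Acoef_five_mul_hullBeta_pow {x : ℝ} (hx : 1 ≤ x) :
    HasSum (fun p ↦ Acoef 5 (p + 1) * hullBeta x ^ (p + 1)) (x - 1) := by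
  convert hasSum_Acoef_mul_pow (C := 5) (by norm_num) (hullBeta_nonneg hx)
    (hullBeta_lt_one (by linarith)) using 1
  rw [sqrt_five_sq_sub_hullBeta_div (by linarith)]
  ring

theorem Pperim_eq (d p : ℕ) : Pperim d p = Acoef 5 p * (hullBeta d ^ p - hullBeta (d - 1) ^ p) := by
  rw [Pperim, hullBeta, hullBeta]
  ring_nf

theorem Pperim_nonneg_and_sums_to_one (d : ℕ) (hd : 2 ≤ d) :
    (∀ p : ℕ, 1 ≤ p → 0 ≤ Pperim d p) ∧ HasSum (fun p : ℕ => Pperim d (p + 1)) 1 := by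
  have hd' : (2 : ℝ) ≤ d := by exact_mod_cast hd
  refine ⟨fun p _ ↦ ?_, ?_⟩
  · have hle : hullBeta (d - 1) ≤ hullBeta d :=
      monotoneOn_hullBeta (Set.mem_Ioi.mpr (by linarith)) (Set.mem_Ioi.mpr (by linarith))
        (by linarith)
    rw [Pperim_eq]
    exact mul_nonneg (Acoef_nonneg (by norm_num) p)
      (sub_nonneg.mpr (pow_le_pow_left₀ (hullBeta_nonneg (by linarith)) hle p))
  · have h := (hasSum_Acoef_five_mul_hullBeta_pow (by linarith : (1 : ℝ) ≤ d)).sub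
      (hasSum_Acoef_five_mul_hullBeta_pow (by linarith : (1 : ℝ) ≤ d - 1))
    simp only [← mul_sub, ← Pperim_eq, sub_sub_cancel] at h
    exact h
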